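/- arXiv:0810.2767 — 2 statements merged into one kernel-verified Lean document; each statement's English description precedes it below -/
import Mathlib

section
/- For 1 ≤ k ≤ n, the Jucys-Murphy element ξ_k of F[G_n] commutes with every element of the subgroup G'_{n-k} consisting of elements ((g_1,...,g_n), σ) with g_i = 1 for i ≤ k and σ fixing 1,...,k. -/
open MonoidAlgebra

/-- The action of `S_n` on `G^n` by permuting coordinates: `(w • g) i = g (w⁻¹ i)`. -/
def permHom (G : Type*) [Group G] (n : ℕ) : Equiv.Perm (Fin n) →* MulAut (Fin n → G) where
  toFun σ :=
    { toFun := fun g => g ∘ σ.symm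
      invFun := fun g => g ∘ σ
      left_inv := fun g => by ext i; simp
      right_inv := fun g => by ext i; simp
      map_mul' := fun g h => rfl }
  map_one' := by ext g i; rfl
  map_mul' := fun σ τ => by ext g i; simp [Equiv.Perm.mul_def]

/-- The wreath product `G_n = G^n ⋊ S_n`. -/
abbrev Wreath (G : Type*) [Group G] (n : ℕ) :=
  SemidirectProduct (Fin n → G) (Equiv.Perm (Fin n)) (permHom G n)

/-- `h^{(i)} ∈ G^n`: the tuple with `h` in the `i`-th coordinate and `1` elsewhere. -/
def coordEl {G : Type*} [Group G] {n : ℕ} (i : Fin n) (h : G) : Fin n → G :=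
  fun j => if j = i then h else 1

/-- The generalized Jucys-Murphy element
`ξ_k = Σ_{l>k} Σ_{h∈G} (h^{(k)} (h⁻¹)^{(l)}, (k,l)) ∈ F[G_n]`. -/
noncomputable def jmElem (F : Type*) [Field F] (G : Type*) [Group G] [Fintype G] (n : ℕ)
    (k : Fin n) : MonoidAlgebra F (Wreath G n) :=
  ∑ l ∈ Finset.Ioi k, ∑ h : G,
    single (⟨coordEl k h * coordEl l h⁻¹, Equiv.swap k l⟩ : Wreath G n) 1

/-!
Conjugation by `x = (g, σ) ∈ G'_{n-k}` permutes the summands of `ξ_k`: since `g k = 1` and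
`σ k = k`, it sends `(h^{(k)} (h⁻¹)^{(l)}, (k,l))` to the summand indexed by `σ l` and
`h · g(σ l)⁻¹`. As `σ` preserves `{l > k}` and right translation permutes `G`, the sum is
unchanged.
-/

section Wreath

variable {G : Type*} [Group G] {n : ℕ}

theorem coordEl_apply_self (i : Fin n) (h : G) : coordEl i h i = h := if_pos rfl

theorem coordEl_apply_of_ne {i j : Fin n} (hji : j ≠ i) (h : G) : coordEl i h j = 1 := if_neg hji

def jmTerm (k l : Fin n) (h : G) : Wreath G n :=
  ⟨coordEl k h * coordEl l h⁻¹, Equiv.swap k l⟩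

theorem jmElem_eq_sum_jmTerm (F : Type*) [Field F] [Fintype G] (k : Fin n) :
    jmElem F G n k = ∑ l ∈ Finset.Ioi k, ∑ h : G, single (jmTerm k l h) 1 :=
  rfl

theorem mul_jmTerm {g : Fin n → G} {σ : Equiv.Perm (Fin n)} {k l : Fin n}
    (hgk : g k = 1) (hσk : σ k = k) (hkl : k ≠ l) (h : G) :
    (⟨g, σ⟩ : Wreath G n) * jmTerm k l h =
      jmTerm k (σ l) (h * (g (σ l))⁻¹) * ⟨g, σ⟩ := by
  have hkσl : k ≠ σ l := fun e => hkl (σ.injective (hσk.trans e))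
  have hσsk : σ.symm k = k := σ.symm_apply_eq.mpr hσk.symm
  refine SemidirectProduct.ext (funext fun j => ?_) ?_
  · change g j * (coordEl k h (σ.symm j) * coordEl l h⁻¹ (σ.symm j)) =
      coordEl k (h * (g (σ l))⁻¹) j * coordEl (σ l) (h * (g (σ l))⁻¹)⁻¹ j *
        g ((Equiv.swap k (σ l)).symm j)
    rw [Equiv.symm_swap]
    by_cases hjk : j = k
    · subst hjk
      simp only [hσsk, Equiv.swap_apply_left, coordEl_apply_self, coordEl_apply_of_ne hkl,
        coordEl_apply_of_ne hkσl, hgk]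
      group
    by_cases hjl : j = σ l
    · subst hjl
      simp only [Equiv.symm_apply_apply, Equiv.swap_apply_right, coordEl_apply_self,
        coordEl_apply_of_ne hkl.symm, coordEl_apply_of_ne hkσl.symm, hgk]
      group
    · have hσjk : σ.symm j ≠ k := fun e => hjk ((σ.symm_apply_eq.mp e).trans hσk)
      have hσjl : σ.symm j ≠ l := fun e => hjl (by rw [← e, Equiv.apply_symm_apply])
      simp only [Equiv.swap_apply_of_ne_of_ne hjk hjl, coordEl_apply_of_ne hσjk,
        coordEl_apply_of_ne hσjl, coordEl_apply_of_ne hjk, coordEl_apply_of_ne hjl]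
      group
  · change σ * Equiv.swap k l = Equiv.swap k (σ l) * σ
    rw [Equiv.mul_swap_eq_swap_mul, hσk]

end Wreath

theorem Equiv.Perm.sum_Ioi_comp {ι M : Type*} [LinearOrder ι] [LocallyFiniteOrderTop ι]
    [AddCommMonoid M] (σ : Equiv.Perm ι) {k : ι} (hσ : ∀ i, i ≤ k → σ i = i)
    (f : ι → M) :
    ∑ l ∈ Finset.Ioi k, f (σ l) = ∑ l ∈ Finset.Ioi k, f l :=
  σ.sum_comp _ f fun l hl => by
    simpa using fun hlk => hl (hσ l hlk)

/-- For `1 ≤ k ≤ n`, the Jucys-Murphy element `ξ_k` of `F[G_n]` commutes with every element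
`((g_1,…,g_n),σ)` of the subgroup `G'_{n-k}` of `G_n` consisting of the elements with
`g_i = 1` for all `i ≤ k` and `σ` fixing every `i ≤ k`. -/
theorem jmElem_commutes_with_subgroup (F : Type*) [Field F] (G : Type*) [Group G] [Fintype G]
    (n : ℕ) (k : Fin n) (g : Fin n → G) (σ : Equiv.Perm (Fin n))
    (hg : ∀ i : Fin n, i ≤ k → g i = 1) (hσ : ∀ i : Fin n, i ≤ k → σ i = i) :
    single (⟨g, σ⟩ : Wreath G n) (1 : F) * jmElem F G n k =
      jmElem F G n k * single (⟨g, σ⟩ : Wreath G n) (1 : F) := by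
  simp only [jmElem_eq_sum_jmTerm, Finset.mul_sum, Finset.sum_mul, single_mul_single, one_mul]
  calc ∑ l ∈ Finset.Ioi k, ∑ h : G, single ((⟨g, σ⟩ : Wreath G n) * jmTerm k l h) (1 : F)
      = ∑ l ∈ Finset.Ioi k, ∑ h : G,
          single (jmTerm k (σ l) (h * (g (σ l))⁻¹) * ⟨g, σ⟩) (1 : F) :=
        Finset.sum_congr rfl fun l hl => Finset.sum_congr rfl fun h _ => by
          rw [mul_jmTerm (hg k le_rfl) (hσ k le_rfl) (Finset.mem_Ioi.mp hl).ne]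
    _ = ∑ l ∈ Finset.Ioi k, ∑ h : G, single (jmTerm k (σ l) h * ⟨g, σ⟩) (1 : F) :=
        Finset.sum_congr rfl fun l _ =>
          Equiv.sum_comp (Equiv.mulRight (g (σ l))⁻¹) fun h =>
            single (jmTerm k (σ l) h * (⟨g, σ⟩ : Wreath G n)) (1 : F)
    _ = ∑ l ∈ Finset.Ioi k, ∑ h : G, single (jmTerm k l h * ⟨g, σ⟩) (1 : F) :=
        σ.sum_Ioi_comp hσ fun l =>
          ∑ h : G, single (jmTerm k l h * (⟨g, σ⟩ : Wreath G n)) (1 : F)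
end

section
/- Let I(n,G) = F[Ḡ_n](1−ε_n) be the left ideal of F[Ḡ_n] generated by 1−ε_n, and let Z̄_{0,n} be the center of F[Ḡ_n]. Then I(n,G) ∩ Z̄_{0,n} = Z_{0,n}·(1−ε_1)(1−ε_2)⋯(1−ε_n), where Z_{0,n} is the center of F[G_n]. -/
open MonoidAlgebra

/-- The group algebra `ℤ[G]`, used as an ambient ring in which `G ∪ {0}` embeds as
`{0} ∪ {single g 1 | g ∈ G}`. -/
abbrev GA (G : Type*) [Group G] := MonoidAlgebra ℤ G

/-- `a` is an entry in `G ∪ {0}`. -/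
def IsEnt {G : Type*} [Group G] (a : GA G) : Prop := a = 0 ∨ ∃ g : G, a = single g 1

/-- An `n × n` matrix with entries in `G ∪ {0}` such that every row and every column
contains at most one nonzero entry. -/
def IsRC {G : Type*} [Group G] {n : ℕ} (M : Matrix (Fin n) (Fin n) (GA G)) : Prop :=
  (∀ i, {j | M i j ≠ 0}.Subsingleton) ∧ (∀ j, {i | M i j ≠ 0}.Subsingleton) ∧
    ∀ i j, IsEnt (M i j)

theorem IsEnt.mul {G : Type*} [Group G] {a b : GA G} (ha : IsEnt a) (hb : IsEnt b) :
    IsEnt (a * b) := by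
  rcases ha with ha | ⟨g, rfl⟩
  · exact Or.inl (by simp [ha])
  rcases hb with hb | ⟨g', rfl⟩
  · exact Or.inl (by simp [hb])
  · exact Or.inr ⟨g * g', by simp [MonoidAlgebra.single_mul_single]⟩

theorem exists_of_mul_ne_zero {G : Type*} [Group G] {n : ℕ}
    {M N : Matrix (Fin n) (Fin n) (GA G)} {i j : Fin n} (h : (M * N) i j ≠ 0) :
    ∃ k, M i k ≠ 0 ∧ N k j ≠ 0 := by
  by_contra hc
  push_neg at hc
  apply h
  rw [Matrix.mul_apply]
  refine Finset.sum_eq_zero fun k _ => ?_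
  by_cases hk : M i k = 0
  · simp [hk]
  · simp [hc k hk]

/-- The semigroup `Ḡ_n` of `n × n` matrices over `G ∪ {0}` with at most one nonzero entry
in each row and each column, realized as a submonoid of the matrix ring over `ℤ[G]`. -/
def GBar (G : Type*) [Group G] (n : ℕ) : Submonoid (Matrix (Fin n) (Fin n) (GA G)) where
  carrier := {M | IsRC M}
  one_mem' := by
    have key : ∀ a b : Fin n, (1 : Matrix (Fin n) (Fin n) (GA G)) a b ≠ 0 → a = b := by
      intro a b h
      by_contra hab
      simp [Matrix.one_apply, hab] at h
    refine ⟨fun i => ?_, fun j => ?_, fun i j => ?_⟩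
    · intro a ha b hb
      exact (key i a ha).symm.trans (key i b hb)
    · intro a ha b hb
      exact (key a j ha).trans (key b j hb).symm
    · by_cases h : i = j
      · subst h
        exact Or.inr ⟨1, by simp [Matrix.one_apply, MonoidAlgebra.one_def]⟩
      · exact Or.inl (by simp [Matrix.one_apply, h])
  mul_mem' := by
    rintro M N ⟨hMr, hMc, hMe⟩ ⟨hNr, hNc, hNe⟩
    refine ⟨fun i => ?_, fun j => ?_, fun i j => ?_⟩
    · intro a ha b hb
      obtain ⟨k, hk1, hk2⟩ := exists_of_mul_ne_zero ha
      obtain ⟨k', hk1', hk2'⟩ := exists_of_mul_ne_zero hb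
      have : k = k' := hMr i hk1 hk1'
      subst this
      exact hNr k hk2 hk2'
    · intro a ha b hb
      obtain ⟨k, hk1, hk2⟩ := exists_of_mul_ne_zero ha
      obtain ⟨k', hk1', hk2'⟩ := exists_of_mul_ne_zero hb
      have : k = k' := hNc j hk2 hk2'
      subst this
      exact hMc k hk1 hk1'
    · by_cases h : (M * N) i j = 0
      · exact Or.inl h
      obtain ⟨k, hk1, hk2⟩ := exists_of_mul_ne_zero h
      have hsum : (M * N) i j = M i k * N k j := by
        rw [Matrix.mul_apply]
        refine Finset.sum_eq_single k (fun b _ hb => ?_) (by simp)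
        by_cases hbz : M i b = 0
        · simp [hbz]
        · exact absurd (hMr i hbz hk1) hb
      rw [hsum]
      exact (hMe i k).mul (hNe k j)

/-- The idempotent `ε_j ∈ Ḡ_n`: the diagonal matrix with `0` in position `(j,j)` and
`1` in the other diagonal positions. -/
noncomputable def epsEl (G : Type*) [Group G] {n : ℕ} (j : Fin n) : GBar G n :=
  ⟨Matrix.diagonal (fun i => if i = j then 0 else 1), by
    have key : ∀ a b : Fin n,
        Matrix.diagonal (fun i : Fin n => if i = j then (0 : GA G) else 1) a b ≠ 0 → a = b := by
      intro a b h
      by_contra hab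
      simp [Matrix.diagonal_apply_ne _ hab] at h
    refine ⟨fun i => ?_, fun k => ?_, fun i k => ?_⟩
    · intro a ha b hb
      exact (key i a ha).symm.trans (key i b hb)
    · intro a ha b hb
      exact (key a k ha).trans (key b k hb).symm
    · by_cases h : i = k
      · subst h
        by_cases hij : i = j
        · exact Or.inl (by simp [Matrix.diagonal_apply_eq, hij])
        · exact Or.inr ⟨1, by simp [Matrix.diagonal_apply_eq, hij, MonoidAlgebra.one_def]⟩
      · exact Or.inl (by simp [Matrix.diagonal_apply_ne _ h])⟩

/-- The monoid embedding of the wreath product `G_n` into the matrices over `G ∪ {0}`: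
`(g,σ)` goes to the matrix whose `(i,j)` entry is `g_i` if `σ(j) = i` and `0` otherwise. -/
noncomputable def wreathHom (G : Type*) [Group G] (n : ℕ) :
    Wreath G n →* Matrix (Fin n) (Fin n) (GA G) where
  toFun x := Matrix.of fun i j => if x.right j = i then single (x.left i) 1 else 0
  map_one' := by
    apply Matrix.ext
    intro i j
    by_cases h : i = j <;>
      simp [Matrix.one_apply, h, MonoidAlgebra.one_def, eq_comm]
  map_mul' := by
    rintro ⟨a, σ⟩ ⟨b, τ⟩
    apply Matrix.ext
    intro i j
    rw [Matrix.mul_apply, Finset.sum_eq_single (τ j)]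
    · simp only [SemidirectProduct.mul_left, SemidirectProduct.mul_right, Matrix.of_apply]
      rw [Equiv.Perm.mul_apply]
      by_cases h : σ (τ j) = i
      · rw [if_pos h, if_pos h]
        simp only [if_true]
        rw [MonoidAlgebra.single_mul_single]
        congr 1
        have hs : σ.symm i = τ j := by rw [← h]; simp
        simp [permHom, Pi.mul_apply, hs]
      · rw [if_neg h, if_neg h, zero_mul]
    · intro b' _ hb'
      simp only [Matrix.of_apply]
      exact mul_eq_zero_of_right _ (if_neg fun hc => hb' hc.symm)
    · simp

theorem wreathHom_mem_GBar (G : Type*) [Group G] (n : ℕ) (x : Wreath G n) :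
    wreathHom G n x ∈ GBar G n := by
  have key : ∀ i j : Fin n, wreathHom G n x i j ≠ 0 → x.right j = i := by
    intro i j h
    by_contra hc
    simp [wreathHom, hc] at h
  refine ⟨fun i => ?_, fun j => ?_, fun i j => ?_⟩
  · intro a ha b hb
    exact x.right.injective ((key i a ha).trans (key i b hb).symm)
  · intro a ha b hb
    exact (key a j ha).symm.trans (key b j hb)
  · by_cases h : x.right j = i
    · exact Or.inr ⟨x.left i, by simp [wreathHom, h]⟩
    · exact Or.inl (by simp [wreathHom, h])

/-- The wreath product `G_n` as the submonoid of `Ḡ_n` of matrices with exactly one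
nonzero entry in each row and each column. -/
noncomputable def GFull (G : Type*) [Group G] (n : ℕ) :
    Submonoid (Matrix (Fin n) (Fin n) (GA G)) :=
  MonoidHom.mrange (wreathHom G n)

theorem GFull_le_GBar (G : Type*) [Group G] (n : ℕ) : GFull G n ≤ GBar G n := by
  rintro M ⟨x, rfl⟩
  exact wreathHom_mem_GBar G n x

/-- An element of the wreath product, viewed inside `Ḡ_n`. -/
noncomputable def wEl {G : Type*} [Group G] {n : ℕ} (x : Wreath G n) : GBar G n :=
  ⟨wreathHom G n x, wreathHom_mem_GBar G n x⟩

/-- `(1−ε_1)(1−ε_2)⋯(1−ε_n) ∈ F[Ḡ_n]` (the factors pairwise commute). -/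
noncomputable def epsBarAll (F : Type*) [Field F] (G : Type*) [Group G] (n : ℕ) :
    MonoidAlgebra F (GBar G n) :=
  ((List.finRange n).map fun i => 1 - single (epsEl G i) (1 : F)).prod

/-!
If `x = y(1-ε_n)` is central then `xε_n = 0`, and since every `ε_i` is conjugate to `ε_n` by
a permutation matrix, `xε_i = 0` for all `i`; hence `x = x(1-ε_1)⋯(1-ε_n) = xē`. Split
`x` into its part `x₀` supported on `G_n` (the matrices without a zero row) and the rest, which is
supported on matrices with a zero row, hence with a zero column, and is therefore killed by `ē`.
So `x = x₀ē`, and `x₀` is central in `F[G_n]` because restricting to `G_n` commutes with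
multiplication by the units `G_n`. Conversely `ē` commutes with `G_n` (conjugation permutes
its factors) and `uē = ēu = 0` for every `u` with a zero row, so `zē` is central for every
central `z` of `F[G_n]`.
-/

section MonoidAlgebra

variable {R : Type*} [CommSemiring R] {H K : Type*}

theorem coeff_comapDomain_apply {f : H → K} (hf : Function.Injective f)
    (x : MonoidAlgebra R K) (m : H) : (comapDomain f hf x).coeff m = x.coeff (f m) := by
  rw [coeff_comapDomain, Finsupp.comapDomain_apply]

variable [Monoid H] [Monoid K]

theorem mem_center_of_forall_commute_of {z : MonoidAlgebra R H}
    (h : ∀ u : H, Commute (of R H u) z) : z ∈ Subalgebra.center R (MonoidAlgebra R H) := by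
  refine Subalgebra.mem_center_iff.2 fun b => ?_
  induction b using MonoidAlgebra.induction_on with
  | of u => exact h u
  | add a b ha hb => rw [add_mul, mul_add, ha, hb]
  | smul r a ha => rw [smul_mul_assoc, mul_smul_comm, ha]

theorem coeff_single_unit_mul (u : Hˣ) (r : R) (x : MonoidAlgebra R H) (m : H) :
    (single (u : H) r * x).coeff m = r * x.coeff (↑u⁻¹ * m) :=
  coeff_single_mul_eq_mul_coeff _ fun _ _ => (u.eq_inv_mul_iff_mul_eq).symm

theorem coeff_mul_single_unit (u : Hˣ) (r : R) (x : MonoidAlgebra R H) (m : H) :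
    (x * single (u : H) r).coeff m = x.coeff (m * ↑u⁻¹) * r :=
  coeff_mul_single_eq_coeff_mul _ fun _ _ => (u.eq_mul_inv_iff_mul_eq).symm

theorem comapDomain_single_unit_mul (f : H →* K) (hf : Function.Injective f) (u : Hˣ) (r : R)
    (x : MonoidAlgebra R K) :
    comapDomain f hf (single (f u) r * x) = single (u : H) r * comapDomain f hf x := by
  ext m
  rw [coeff_comapDomain_apply, coeff_single_unit_mul, coeff_comapDomain_apply, map_mul]
  exact coeff_single_unit_mul (Units.map f u) r x (f m)

theorem comapDomain_mul_single_unit (f : H →* K) (hf : Function.Injective f) (u : Hˣ) (r : R)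
    (x : MonoidAlgebra R K) :
    comapDomain f hf (x * single (f u) r) = comapDomain f hf x * single (u : H) r := by
  ext m
  rw [coeff_comapDomain_apply, coeff_mul_single_unit, coeff_comapDomain_apply, map_mul]
  exact coeff_mul_single_unit (Units.map f u) r x (f m)

end MonoidAlgebra

theorem IsIdempotentElem.mul_list_prod_map_of_mem {M ι : Type*} [Monoid M] {f : ι → M}
    (hf : ∀ i j, Commute (f i) (f j)) {i : ι} (hi : IsIdempotentElem (f i)) {l : List ι}
    (hil : i ∈ l) : f i * (l.map f).prod = (l.map f).prod := by
  induction l with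
  | nil => cases hil
  | cons a t ih =>
    rw [List.map_cons, List.prod_cons, ← mul_assoc]
    rcases List.mem_cons.1 hil with rfl | hit
    · rw [hi.eq]
    · rw [(hf i a).eq, mul_assoc, ih hit]

theorem IsIdempotentElem.list_prod_map_mul_of_mem {M ι : Type*} [Monoid M] {f : ι → M}
    (hf : ∀ i j, Commute (f i) (f j)) {i : ι} (hi : IsIdempotentElem (f i)) {l : List ι}
    (hil : i ∈ l) : (l.map f).prod * f i = (l.map f).prod := by
  rw [← (Commute.list_prod_right _ _ fun _ h => ?_).eq, hi.mul_list_prod_map_of_mem hf hil]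
  obtain ⟨j, -, rfl⟩ := List.mem_map.1 h
  exact hf i j

theorem Matrix.exists_ne_zero_of_forall_exists_row_ne_zero {n α : Type*} [Finite n] [Zero α]
    {M : Matrix n n α} (hcol : ∀ j, {i | M i j ≠ 0}.Subsingleton)
    (hrow : ∀ i, ∃ j, M i j ≠ 0) (j : n) : ∃ i, M i j ≠ 0 := by
  choose f hf using hrow
  have hf_inj : f.Injective := fun a b hab => hcol (f a) (hf a) (hab ▸ hf b)
  obtain ⟨i, rfl⟩ := hf_inj.bijective_of_finite.2 j
  exact ⟨i, hf i⟩

section GBar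

variable {G : Type*} [Group G] {m : ℕ}

theorem epsEl_mul_apply (i : Fin m) (M : GBar G m) (a b : Fin m) :
    (epsEl G i * M).val a b = if a = i then 0 else M.val a b := by
  change (Matrix.diagonal (fun k => if k = i then (0 : GA G) else 1) * M.val) a b = _
  rw [Matrix.diagonal_mul]
  split_ifs <;> simp

theorem mul_epsEl_apply (i : Fin m) (M : GBar G m) (a b : Fin m) :
    (M * epsEl G i).val a b = if b = i then 0 else M.val a b := by
  change (M.val * Matrix.diagonal (fun k => if k = i then (0 : GA G) else 1)) a b = _
  rw [Matrix.mul_diagonal]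
  split_ifs <;> simp

theorem epsEl_val_apply (i a b : Fin m) :
    (epsEl G i).val a b = if a = i then 0 else if a = b then 1 else 0 := by
  change Matrix.diagonal _ a b = _
  rw [Matrix.diagonal_apply]
  split_ifs <;> simp_all

theorem isIdempotentElem_epsEl (i : Fin m) : IsIdempotentElem (epsEl G i) := by
  refine Subtype.ext (Matrix.ext fun a b => ?_)
  rw [epsEl_mul_apply, epsEl_val_apply]
  split_ifs <;> rfl

theorem commute_epsEl (i j : Fin m) : Commute (epsEl G i) (epsEl G j) := by
  refine Subtype.ext (Matrix.ext fun a b => ?_)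
  simp only [mul_epsEl_apply, epsEl_val_apply]
  split_ifs <;> simp_all

def HasZeroRow (M : GBar G m) : Prop := ∃ i, ∀ j, M.val i j = 0

theorem hasZeroRow_iff_exists_zero_col {M : GBar G m} :
    HasZeroRow M ↔ ∃ j, ∀ i, M.val i j = 0 := by
  have hcolT : ∀ j, {i | M.val.transpose i j ≠ 0}.Subsingleton := M.prop.1
  unfold HasZeroRow
  constructor
  · contrapose!
    exact Matrix.exists_ne_zero_of_forall_exists_row_ne_zero hcolT
  · contrapose!
    exact Matrix.exists_ne_zero_of_forall_exists_row_ne_zero M.prop.2.1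

theorem epsEl_mul_of_zero_row {M : GBar G m} {i : Fin m} (h : ∀ j, M.val i j = 0) :
    epsEl G i * M = M := by
  refine Subtype.ext (Matrix.ext fun a b => ?_)
  rw [epsEl_mul_apply]
  split_ifs with ha
  · rw [ha, h]
  · rfl

theorem mul_epsEl_of_zero_col {M : GBar G m} {j : Fin m} (h : ∀ i, M.val i j = 0) :
    M * epsEl G j = M := by
  refine Subtype.ext (Matrix.ext fun a b => ?_)
  rw [mul_epsEl_apply]
  split_ifs with hb
  · rw [hb, h]
  · rfl

theorem mem_GFull_of_not_hasZeroRow {M : GBar G m} (h : ¬ HasZeroRow M) : M.val ∈ GFull G m := by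
  simp only [HasZeroRow, not_exists, not_forall] at h
  choose f hf using h
  have hf_inj : f.Injective := fun a b hab => M.prop.2.1 (f a) (hf a) (hab ▸ hf b)
  choose g hg using fun i => (M.prop.2.2 i (f i)).resolve_left (hf i)
  let σ := Equiv.ofBijective f hf_inj.bijective_of_finite
  refine ⟨⟨g, σ.symm⟩, Matrix.ext fun i j => ?_⟩
  change (if σ.symm j = i then single (g i) 1 else 0) = M.val i j
  have hσ : σ.symm j = i ↔ j = f i := σ.symm_apply_eq
  by_cases hj : j = f i
  · rw [if_pos (hσ.2 hj), hj, hg]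
  · rw [if_neg (mt hσ.1 hj)]
    by_contra hne
    exact hj (M.prop.1 i (Ne.symm hne) (hf i))

theorem isUnit_wEl (x : Wreath G m) : IsUnit (wEl x) :=
  (Group.isUnit x).map ((wreathHom G m).codRestrict (GBar G m) (wreathHom_mem_GBar G m))

theorem isUnit_of_GFull (p : GFull G m) : IsUnit p := by
  obtain ⟨x, hx⟩ := p.prop
  have hp : (wreathHom G m).mrangeRestrict x = p := Subtype.ext hx
  exact hp ▸ (Group.isUnit x).map _

theorem epsEl_mul_wEl (x : Wreath G m) (i : Fin m) :
    epsEl G (x.right i) * wEl x = wEl x * epsEl G i := by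
  refine Subtype.ext (Matrix.ext fun a b => ?_)
  rw [epsEl_mul_apply, mul_epsEl_apply]
  change (if a = x.right i then 0 else if x.right b = a then single (x.left a) 1 else 0) =
    if b = i then 0 else if x.right b = a then single (x.left a) 1 else 0
  by_cases hba : x.right b = a
  · subst hba
    simp only [x.right.injective.eq_iff]
  · simp only [hba, if_false, ite_self]

end GBar

section EpsBar

variable (F : Type*) [Field F] {G : Type*} [Group G] {m : ℕ}

noncomputable def oneSubEps (i : Fin m) : MonoidAlgebra F (GBar G m) :=
  1 - single (epsEl G i) 1

theorem epsBarAll_eq_prod : epsBarAll F G m = ((List.finRange m).map (oneSubEps F)).prod := rfl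

variable {F}

theorem isIdempotentElem_oneSubEps (i : Fin m) : IsIdempotentElem (oneSubEps F (G := G) i) :=
  ((isIdempotentElem_epsEl i).map (of F (GBar G m))).one_sub

theorem commute_oneSubEps (i j : Fin m) : Commute (oneSubEps F (G := G) i) (oneSubEps F j) :=
  (Commute.one_left _).sub_left
    ((Commute.one_right _).sub_right ((commute_epsEl i j).map (of F (GBar G m))))

theorem oneSubEps_mul_epsBarAll (i : Fin m) : oneSubEps F i * epsBarAll F G m = epsBarAll F G m :=
  (isIdempotentElem_oneSubEps i).mul_list_prod_map_of_mem commute_oneSubEps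
    (List.mem_finRange i)

theorem epsBarAll_mul_oneSubEps (i : Fin m) : epsBarAll F G m * oneSubEps F i = epsBarAll F G m :=
  (isIdempotentElem_oneSubEps i).list_prod_map_mul_of_mem commute_oneSubEps
    (List.mem_finRange i)

theorem oneSubEps_mul_single_epsEl (i : Fin m) :
    oneSubEps F i * single (epsEl G i) 1 = 0 := by
  rw [oneSubEps, sub_mul, one_mul, single_mul_single, isIdempotentElem_epsEl i, one_mul,
    sub_self]

theorem single_mul_oneSubEps_of_zero_col {M : GBar G m} {j : Fin m} (h : ∀ i, M.val i j = 0)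
    (c : F) : single M c * oneSubEps F j = 0 := by
  rw [oneSubEps, mul_sub, mul_one, single_mul_single, mul_one, mul_epsEl_of_zero_col h, sub_self]

theorem oneSubEps_mul_single_of_zero_row {M : GBar G m} {i : Fin m} (h : ∀ j, M.val i j = 0)
    (c : F) : oneSubEps F i * single M c = 0 := by
  rw [oneSubEps, sub_mul, one_mul, single_mul_single, one_mul, epsEl_mul_of_zero_row h, sub_self]

theorem single_mul_epsBarAll_of_hasZeroRow {M : GBar G m} (h : HasZeroRow M) (c : F) :
    single M c * epsBarAll F G m = 0 := by
  obtain ⟨j, hj⟩ := hasZeroRow_iff_exists_zero_col.1 h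
  rw [← oneSubEps_mul_epsBarAll j, ← mul_assoc, single_mul_oneSubEps_of_zero_col hj, zero_mul]

theorem epsBarAll_mul_single_of_hasZeroRow {M : GBar G m} (h : HasZeroRow M) (c : F) :
    epsBarAll F G m * single M c = 0 := by
  obtain ⟨i, hi⟩ := h
  rw [← epsBarAll_mul_oneSubEps i, mul_assoc, oneSubEps_mul_single_of_zero_row hi, mul_zero]

theorem mul_epsBarAll_eq_zero {s : MonoidAlgebra F (GBar G m)}
    (hs : ∀ M, s.coeff M ≠ 0 → HasZeroRow M) : s * epsBarAll F G m = 0 := by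
  rw [← sum_coeff_single s, Finsupp.sum_mul]
  exact Finset.sum_eq_zero fun M hM =>
    single_mul_epsBarAll_of_hasZeroRow (hs M (Finsupp.mem_support_iff.1 hM)) _

theorem mul_epsBarAll_eq_self {x : MonoidAlgebra F (GBar G m)}
    (hx : ∀ i, x * single (epsEl G i) 1 = 0) : x * epsBarAll F G m = x := by
  rw [epsBarAll_eq_prod]
  refine List.prod_induction (fun a => x * a = x) (fun a b ha hb => ?_) (mul_one x) ?_
  · rw [← mul_assoc, ha, hb]
  · simp only [List.mem_map, List.mem_finRange, true_and, forall_exists_index,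
      forall_apply_eq_imp_iff]
    intro i
    rw [oneSubEps, mul_sub, mul_one, hx, sub_zero]

theorem single_wEl_mul_oneSubEps (x : Wreath G m) (i : Fin m) :
    single (wEl x) (1 : F) * oneSubEps F i = oneSubEps F (x.right i) * single (wEl x) 1 := by
  simp only [oneSubEps, mul_sub, sub_mul, mul_one, one_mul, single_mul_single, epsEl_mul_wEl]

theorem commute_single_wEl_epsBarAll (x : Wreath G m) :
    Commute (single (wEl x) (1 : F)) (epsBarAll F G m) := by
  have hsemiconj : ∀ l : List (Fin m), single (wEl x) (1 : F) * (l.map (oneSubEps F)).prod =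
      ((l.map x.right).map (oneSubEps F)).prod * single (wEl x) 1 := by
    intro l
    induction l with
    | nil => simp
    | cons a t ih =>
      simp only [List.map_cons, List.prod_cons]
      rw [← mul_assoc, single_wEl_mul_oneSubEps, mul_assoc, ih, mul_assoc]
  have hperm : List.Perm (((List.finRange m).map x.right).map (oneSubEps F (G := G)))
      ((List.finRange m).map (oneSubEps F)) := x.right.map_finRange_perm.map _
  rw [Commute, SemiconjBy, epsBarAll_eq_prod, hsemiconj, hperm.prod_eq'
    (List.pairwise_map.2 (List.pairwise_of_forall fun i j => commute_oneSubEps _ _))]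

end EpsBar

section Center

variable {F : Type*} [Field F] {G : Type*} [Group G] {m : ℕ}

noncomputable def restrictGFull (x : MonoidAlgebra F (GBar G m)) : MonoidAlgebra F (GFull G m) :=
  comapDomain (Submonoid.inclusion (GFull_le_GBar G m)) (Submonoid.inclusion_injective _) x

theorem mul_single_epsEl_eq_zero_of_mem_center {x : MonoidAlgebra F (GBar G m)}
    (hx : x ∈ Subalgebra.center F (MonoidAlgebra F (GBar G m))) {j : Fin m}
    (hj : x * single (epsEl G j) 1 = 0) (i : Fin m) : x * single (epsEl G i) 1 = 0 := by
  let w : Wreath G m := ⟨1, Equiv.swap i j⟩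
  have hconj : single (epsEl G i) (1 : F) * single (wEl w) 1 =
      single (wEl w) 1 * single (epsEl G j) 1 := by
    rw [single_mul_single, single_mul_single, ← epsEl_mul_wEl, Equiv.swap_apply_right]
  rw [← ((isUnit_wEl w).map (of F (GBar G m))).mul_left_eq_zero, of_apply, mul_assoc, hconj,
    ← mul_assoc, ← Subalgebra.mem_center_iff.1 hx, mul_assoc, hj, mul_zero]

theorem restrictGFull_mem_center {x : MonoidAlgebra F (GBar G m)}
    (hx : x ∈ Subalgebra.center F (MonoidAlgebra F (GBar G m))) :
    restrictGFull x ∈ Subalgebra.center F (MonoidAlgebra F (GFull G m)) := by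
  refine mem_center_of_forall_commute_of fun p => ?_
  obtain ⟨u, rfl⟩ := isUnit_of_GFull p
  rw [Commute, SemiconjBy, of_apply, restrictGFull, ← comapDomain_single_unit_mul,
    ← comapDomain_mul_single_unit, Subalgebra.mem_center_iff.1 hx]

theorem hasZeroRow_of_coeff_sub_mapDomain_restrictGFull_ne_zero (x : MonoidAlgebra F (GBar G m))
    (M : GBar G m)
    (hM : (x - mapDomainRingHom F (Submonoid.inclusion (GFull_le_GBar G m))
      (restrictGFull x)).coeff M ≠ 0) :
    HasZeroRow M := by
  by_contra h
  let p : GFull G m := ⟨M.val, mem_GFull_of_not_hasZeroRow h⟩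
  have hp : Submonoid.inclusion (GFull_le_GBar G m) p = M := rfl
  apply hM
  rw [coeff_sub, Finsupp.sub_apply, ← hp, mapDomainRingHom_apply, coeff_mapDomain,
    Finsupp.mapDomain_apply (Submonoid.inclusion_injective _), restrictGFull,
    coeff_comapDomain_apply, sub_self]

theorem eq_mapDomain_restrictGFull_mul_epsBarAll {x : MonoidAlgebra F (GBar G m)}
    (hx : ∀ i, x * single (epsEl G i) 1 = 0) :
    x = mapDomainRingHom F (Submonoid.inclusion (GFull_le_GBar G m))
      (restrictGFull x) * epsBarAll F G m := by
  set y := mapDomainRingHom F (Submonoid.inclusion (GFull_le_GBar G m)) (restrictGFull x)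
  calc x = (y + (x - y)) * epsBarAll F G m := by rw [add_sub_cancel, mul_epsBarAll_eq_self hx]
    _ = y * epsBarAll F G m := by
      rw [add_mul, mul_epsBarAll_eq_zero
        (hasZeroRow_of_coeff_sub_mapDomain_restrictGFull_ne_zero x), add_zero]

theorem commute_mapDomain_epsBarAll (a : MonoidAlgebra F (GFull G m)) :
    Commute (mapDomainRingHom F (Submonoid.inclusion (GFull_le_GBar G m)) a)
      (epsBarAll F G m) := by
  induction a using MonoidAlgebra.induction_on with
  | of p =>
    obtain ⟨x, hx⟩ := p.prop
    have hp : Submonoid.inclusion (GFull_le_GBar G m) p = wEl x := Subtype.ext hx.symm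
    rw [mapDomainRingHom_apply, of_apply, mapDomain_single, hp]
    exact commute_single_wEl_epsBarAll x
  | add a b ha hb => rw [map_add]; exact ha.add_left hb
  | smul r a ha =>
    rw [mapDomainRingHom_apply, mapDomain_smul, ← mapDomainRingHom_apply]
    exact ha.smul_left r

theorem mapDomain_mul_epsBarAll_mem_center {z : MonoidAlgebra F (GFull G m)}
    (hz : z ∈ Subalgebra.center F (MonoidAlgebra F (GFull G m))) :
    mapDomainRingHom F (Submonoid.inclusion (GFull_le_GBar G m)) z * epsBarAll F G m ∈
      Subalgebra.center F (MonoidAlgebra F (GBar G m)) := by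
  set φ := mapDomainRingHom F (Submonoid.inclusion (GFull_le_GBar G m))
  refine mem_center_of_forall_commute_of fun u => ?_
  by_cases hu : HasZeroRow u
  · calc of F _ u * (φ z * epsBarAll F G m) = of F _ u * epsBarAll F G m * φ z := by
          rw [(commute_mapDomain_epsBarAll z).eq, mul_assoc]
      _ = 0 := by rw [of_apply, single_mul_epsBarAll_of_hasZeroRow hu, zero_mul]
      _ = φ z * epsBarAll F G m * of F _ u := by
          rw [of_apply, mul_assoc, epsBarAll_mul_single_of_hasZeroRow hu, mul_zero]
  · let p : GFull G m := ⟨u.val, mem_GFull_of_not_hasZeroRow hu⟩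
    have hp : φ (of F _ p) = of F _ u := mapDomain_single
    rw [← hp]
    have hpz : Commute (of F _ p) z := Subalgebra.mem_center_iff.1 hz (of F _ p)
    exact (hpz.map φ).mul_right (commute_mapDomain_epsBarAll _)

end Center

/-- Let `I(n+1,G) = F[Ḡ_{n+1}](1−ε_{n+1})` be the left ideal generated by `1−ε_{n+1}` and
`Z̄_{0,n+1}` the center of `F[Ḡ_{n+1}]`.  Then
`I(n+1,G) ∩ Z̄_{0,n+1} = Z_{0,n+1}·(1−ε_1)⋯(1−ε_{n+1})`, where `Z_{0,n+1}` is the center of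
the group algebra `F[G_{n+1}]`, viewed inside `F[Ḡ_{n+1}]`. -/
theorem ideal_inter_center (F : Type*) [Field F] (G : Type*) [Group G] (n : ℕ) :
    {x : MonoidAlgebra F (GBar G (n + 1)) |
        ∃ y, x = y * (1 - single (epsEl G (Fin.last n)) (1 : F))} ∩
      (Subalgebra.center F (MonoidAlgebra F (GBar G (n + 1))) : Set _) =
    (fun z => (MonoidAlgebra.mapDomainRingHom F
        (Submonoid.inclusion (GFull_le_GBar G (n + 1))) z) * epsBarAll F G (n + 1)) ''
      (Subalgebra.center F (MonoidAlgebra F (GFull G (n + 1))) : Set _) := by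
  ext x
  simp only [Set.mem_inter_iff, Set.mem_ofPred_eq, Set.mem_image, SetLike.mem_coe]
  constructor
  · rintro ⟨⟨y, rfl⟩, hx⟩
    have hlast : y * oneSubEps F (Fin.last n) * single (epsEl G (Fin.last n)) 1 = 0 := by
      rw [mul_assoc, oneSubEps_mul_single_epsEl, mul_zero]
    exact ⟨_, restrictGFull_mem_center hx, (eq_mapDomain_restrictGFull_mul_epsBarAll
      (mul_single_epsEl_eq_zero_of_mem_center hx hlast)).symm⟩
  · rintro ⟨z, hz, rfl⟩
    refine ⟨⟨mapDomainRingHom F (Submonoid.inclusion (GFull_le_GBar G (n + 1))) z *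
      epsBarAll F G (n + 1), ?_⟩, mapDomain_mul_epsBarAll_mem_center hz⟩
    rw [mul_assoc, ← oneSubEps, epsBarAll_mul_oneSubEps]
end
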